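/- Linear utility case: let $u(x) = x$, $\rho > 0$ with $\mathbb{E}[\rho]=1$, $\mathbb{E}[\rho\ln\rho] \in (0,\infty)$, and $y > 0$. Then $Y^* = \frac{-y \ln\rho}{\mathbb{E}[\rho\ln\rho]}$ satisfies $\mathbb{E}[\rho Y^*] = -y$ and $\mathbb{E}[e^{-\alpha^* Y^*}] = 1$ where $\alpha^* = \mathbb{E}[\rho\ln\rho]/y$; moreover for every integrable $Y$ with $\mathbb{E}[\rho Y]=-y$ and every $\alpha > \alpha^*$, $\mathbb{E}[e^{-\alpha Y}] > 1$. Hence the minimal duality index over the budget set equals $y/\mathbb{E}[\rho\ln\rho]$, attained at $Y^*$. -/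

import Mathlib

open MeasureTheory ENNReal Real Filter

variable {Ω : Type*} [MeasurableSpace Ω]

/-- `emg μ X α = 𝔼[e^{-α X}]` as a value in `[0,∞]`. -/
noncomputable def emg (μ : Measure Ω) (X : Ω → ℝ) (α : ℝ) : ℝ≥0∞ :=
  ∫⁻ ω, ENNReal.ofReal (Real.exp (-α * X ω)) ∂μ

/-- `α̂ = sup {α ≥ 0 : 𝔼[e^{-α X}] ≤ 1}` as a value in `[0,∞]`. -/
noncomputable def alphaHat (μ : Measure Ω) (X : Ω → ℝ) : ℝ≥0∞ :=
  sSup (ENNReal.ofReal '' {α : ℝ | 0 ≤ α ∧ emg μ X α ≤ 1})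

/-- The duality index `R(X) = α̂⁻¹` (conventions `0⁻¹ = ∞`, `∞⁻¹ = 0`). -/
noncomputable def dualityIndex (μ : Measure Ω) (X : Ω → ℝ) : ℝ≥0∞ :=
  (alphaHat μ X)⁻¹

/-- The mean of `X` is well defined: `𝔼[X⁻] < ∞` or `𝔼[X⁺] < ∞`. -/
def HasWellDefinedMean (μ : Measure Ω) (X : Ω → ℝ) : Prop :=
  (∫⁻ ω, ENNReal.ofReal (max (-X ω) 0) ∂μ) < ⊤ ∨
    (∫⁻ ω, ENNReal.ofReal (max (X ω) 0) ∂μ) < ⊤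

/-! The tangent-line bound `1 + x ≤ eˣ` at `x = -αY - log ρ` gives
`ρ (1 - αY - log ρ) ≤ e^{-αY}`; integrating over the budget set `𝔼[ρY] = -y` yields
`1 + α y - H ≤ 𝔼[e^{-αY}]` with `H = 𝔼[ρ log ρ]`. Hence `𝔼[e^{-αY}] > 1` for every `α > H / y`,
i.e. `α̂(Y) ≤ H / y`. The choice `Y* = -y log ρ / H` makes `e^{-(H/y) Y*} = ρ`, so
`𝔼[e^{-(H/y) Y*}] = 𝔼[ρ] = 1` and the bound is attained. -/

theorem ofReal_integral_le_lintegral_ofReal {μ : Measure Ω} (f : Ω → ℝ) :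
    ENNReal.ofReal (∫ ω, f ω ∂μ) ≤ ∫⁻ ω, ENNReal.ofReal (f ω) ∂μ := by
  by_cases hf : Integrable f μ
  · rw [integral_eq_lintegral_pos_part_sub_lintegral_neg_part hf]
    exact (ENNReal.ofReal_le_ofReal (sub_le_self _ ENNReal.toReal_nonneg)).trans
      ENNReal.ofReal_toReal_le
  · simp [integral_undef hf]

theorem mul_sub_log_add_one_le_exp {r : ℝ} (hr : 0 < r) (t : ℝ) :
    r * (t - Real.log r + 1) ≤ Real.exp t :=
  calc r * (t - Real.log r + 1) ≤ r * Real.exp (t - Real.log r) := by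
        gcongr; linarith [Real.add_one_le_exp (t - Real.log r)]
    _ = Real.exp t := by rw [Real.exp_sub, Real.exp_log hr]; field_simp

theorem ofReal_integral_sub_integral_mul_log_le_emg {μ : Measure Ω} {ρ Y : Ω → ℝ}
    (hρpos : ∀ᵐ ω ∂μ, 0 < ρ ω) (hρint : Integrable ρ μ)
    (hent : Integrable (fun ω => ρ ω * Real.log (ρ ω)) μ)
    (hρY : Integrable (fun ω => ρ ω * Y ω) μ) (α : ℝ) :
    ENNReal.ofReal ((∫ ω, ρ ω ∂μ) - α * (∫ ω, ρ ω * Y ω ∂μ) - ∫ ω, ρ ω * Real.log (ρ ω) ∂μ)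
      ≤ emg μ Y α := by
  have hintegral : (∫ ω, ρ ω ∂μ) - α * (∫ ω, ρ ω * Y ω ∂μ) - ∫ ω, ρ ω * Real.log (ρ ω) ∂μ
      = ∫ ω, ρ ω * (-α * Y ω - Real.log (ρ ω) + 1) ∂μ := by
    rw [← integral_const_mul, ← integral_sub hρint (hρY.const_mul α), ← integral_sub _ hent]
    · exact integral_congr_ae (Eventually.of_forall fun ω => by ring)
    · exact hρint.sub (hρY.const_mul α)
  rw [hintegral]
  refine (ofReal_integral_le_lintegral_ofReal _).trans (lintegral_mono_ae ?_)
  filter_upwards [hρpos] with ω hω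
  exact ENNReal.ofReal_le_ofReal (mul_sub_log_add_one_le_exp hω _)

theorem one_lt_emg_of_integral_mul_eq_neg {μ : Measure Ω} {ρ Y : Ω → ℝ}
    (hρpos : ∀ᵐ ω ∂μ, 0 < ρ ω) (hρint : Integrable ρ μ) (hρ1 : ∫ ω, ρ ω ∂μ = 1)
    (hent : Integrable (fun ω => ρ ω * Real.log (ρ ω)) μ)
    {y : ℝ} (hy : 0 < y) (hρY : Integrable (fun ω => ρ ω * Y ω) μ)
    (hbudget : ∫ ω, ρ ω * Y ω ∂μ = -y)
    {α : ℝ} (hα : (∫ ω, ρ ω * Real.log (ρ ω) ∂μ) / y < α) :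
    1 < emg μ Y α := by
  have hlt : ∫ ω, ρ ω * Real.log (ρ ω) ∂μ < α * y := (div_lt_iff₀ hy).mp hα
  refine lt_of_lt_of_le ?_ (ofReal_integral_sub_integral_mul_log_le_emg hρpos hρint hent hρY α)
  rw [hρ1, hbudget, ← ENNReal.ofReal_one, ENNReal.ofReal_lt_ofReal_iff (by linarith)]
  linarith

theorem emg_eq_one_of_exp_eq {μ : Measure Ω} {ρ X : Ω → ℝ} {α : ℝ}
    (hρint : Integrable ρ μ) (hρ1 : ∫ ω, ρ ω ∂μ = 1)
    (hexp : ∀ᵐ ω ∂μ, Real.exp (-α * X ω) = ρ ω) :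
    emg μ X α = 1 := by
  have hρnonneg : 0 ≤ᵐ[μ] ρ := hexp.mono fun ω h => h ▸ (Real.exp_pos _).le
  rw [emg, lintegral_congr_ae (hexp.mono fun ω h => congrArg ENNReal.ofReal h),
    ← ofReal_integral_eq_lintegral_ofReal hρint hρnonneg, hρ1, ENNReal.ofReal_one]

theorem alphaHat_le_of_one_lt_emg {μ : Measure Ω} {X : Ω → ℝ} {a : ℝ}
    (h : ∀ α, a < α → 1 < emg μ X α) :
    alphaHat μ X ≤ ENNReal.ofReal a := by
  refine sSup_le ?_
  rintro _ ⟨α, ⟨-, hα⟩, rfl⟩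
  exact ENNReal.ofReal_le_ofReal (not_lt.mp fun hlt => (h α hlt).not_ge hα)

theorem alphaHat_eq_of_emg_le_one {μ : Measure Ω} {X : Ω → ℝ} {a : ℝ} (ha : 0 ≤ a)
    (hle : emg μ X a ≤ 1) (h : ∀ α, a < α → 1 < emg μ X α) :
    alphaHat μ X = ENNReal.ofReal a :=
  le_antisymm (alphaHat_le_of_one_lt_emg h) (le_sSup ⟨a, ⟨ha, hle⟩, rfl⟩)

theorem stmt_19_general (μ : Measure Ω)
    (ρ : Ω → ℝ) (hρpos : ∀ᵐ ω ∂μ, 0 < ρ ω)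
    (hρint : Integrable ρ μ) (hρ1 : ∫ ω, ρ ω ∂μ = 1)
    (hent : Integrable (fun ω => ρ ω * Real.log (ρ ω)) μ)
    (hentpos : 0 < ∫ ω, ρ ω * Real.log (ρ ω) ∂μ)
    (y : ℝ) (hy : 0 < y) :
    let H := ∫ ω, ρ ω * Real.log (ρ ω) ∂μ
    let Ystar : Ω → ℝ := fun ω => -y * Real.log (ρ ω) / H
    let αstar := H / y
    Integrable (fun ω => ρ ω * Ystar ω) μ ∧
    (∫ ω, ρ ω * Ystar ω ∂μ) = -y ∧
    emg μ Ystar αstar = 1 ∧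
    (∀ Y : Ω → ℝ, Integrable Y μ → Integrable (fun ω => ρ ω * Y ω) μ →
      (∫ ω, ρ ω * Y ω ∂μ) = -y → ∀ α : ℝ, αstar < α → 1 < emg μ Y α) ∧
    dualityIndex μ Ystar = ENNReal.ofReal (y / H) ∧
    (∀ Y : Ω → ℝ, Integrable Y μ → Integrable (fun ω => ρ ω * Y ω) μ →
      (∫ ω, ρ ω * Y ω ∂μ) = -y → dualityIndex μ Ystar ≤ dualityIndex μ Y) := by
  intro H Ystar αstar
  have hH : H ≠ 0 := hentpos.ne'
  have hαstar : 0 < αstar := div_pos hentpos hy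
  have hρYstar : (fun ω => ρ ω * Ystar ω) = fun ω => (-y / H) * (ρ ω * Real.log (ρ ω)) := by
    funext ω; simp only [Ystar]; ring
  have hint : Integrable (fun ω => ρ ω * Ystar ω) μ := hρYstar ▸ hent.const_mul _
  have hbudget : ∫ ω, ρ ω * Ystar ω ∂μ = -y := by
    rw [hρYstar, integral_const_mul]
    exact div_mul_cancel₀ (-y) hH
  have hemg : emg μ Ystar αstar = 1 := by
    refine emg_eq_one_of_exp_eq hρint hρ1 (hρpos.mono fun ω hω => ?_)
    rw [show -αstar * Ystar ω = Real.log (ρ ω) by simp only [αstar, Ystar]; field_simp,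
      Real.exp_log hω]
  have hlower : ∀ Y : Ω → ℝ, Integrable (fun ω => ρ ω * Y ω) μ →
      ∫ ω, ρ ω * Y ω ∂μ = -y → ∀ α, αstar < α → 1 < emg μ Y α :=
    fun Y hρY hY α hα => one_lt_emg_of_integral_mul_eq_neg hρpos hρint hρ1 hent hy hρY hY hα
  have halphaHat : alphaHat μ Ystar = ENNReal.ofReal αstar :=
    alphaHat_eq_of_emg_le_one hαstar.le hemg.le (hlower Ystar hint hbudget)
  refine ⟨hint, hbudget, hemg, fun Y _ => hlower Y, ?_, fun Y _ hρY hY => ?_⟩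
  · rw [dualityIndex, halphaHat, ← ENNReal.ofReal_inv_of_pos hαstar, inv_div]
  · rw [dualityIndex, dualityIndex, halphaHat]
    exact ENNReal.inv_le_inv.mpr (alphaHat_le_of_one_lt_emg (hlower Y hρY hY))

theorem stmt_19 (μ : Measure Ω) [IsProbabilityMeasure μ]
    (ρ : Ω → ℝ) (hρm : Measurable ρ) (hρpos : ∀ᵐ ω ∂μ, 0 < ρ ω)
    (hnc : ¬ ∃ c : ℝ, ∀ᵐ ω ∂μ, ρ ω = c)
    (hρint : Integrable ρ μ) (hρ1 : ∫ ω, ρ ω ∂μ = 1)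
    (hent : Integrable (fun ω => ρ ω * Real.log (ρ ω)) μ)
    (hlog : Integrable (fun ω => Real.log (ρ ω)) μ)
    (hentpos : 0 < ∫ ω, ρ ω * Real.log (ρ ω) ∂μ)
    (y : ℝ) (hy : 0 < y) :
    let H := ∫ ω, ρ ω * Real.log (ρ ω) ∂μ
    let Ystar : Ω → ℝ := fun ω => -y * Real.log (ρ ω) / H
    let αstar := H / y
    Integrable (fun ω => ρ ω * Ystar ω) μ ∧
    (∫ ω, ρ ω * Ystar ω ∂μ) = -y ∧
    emg μ Ystar αstar = 1 ∧
    (∀ Y : Ω → ℝ, Integrable Y μ → Integrable (fun ω => ρ ω * Y ω) μ →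
      (∫ ω, ρ ω * Y ω ∂μ) = -y → ∀ α : ℝ, αstar < α → 1 < emg μ Y α) ∧
    dualityIndex μ Ystar = ENNReal.ofReal (y / H) ∧
    (∀ Y : Ω → ℝ, Integrable Y μ → Integrable (fun ω => ρ ω * Y ω) μ →
      (∫ ω, ρ ω * Y ω ∂μ) = -y → dualityIndex μ Ystar ≤ dualityIndex μ Y) :=
  stmt_19_general μ ρ hρpos hρint hρ1 hent hentpos y hy
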